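/- Let F be a field, n ≥ 1, d ≥ 1, let f ∈ F_{Ā,C̄}[X] be a polynomial of degree ≤ d, and let 1 ≤ d' ≤ d. Let Φ(f) ∈ A'_d(R) be the evaluation of f at (Z_1,…,Z_n) under the ∘ product. Then the (1, d'+1, 1) entry of Φ(f) equals Σ_m c_m · Π_{t=1}^{d'} z_{σ_m(t), t, l^m_t}, where the sum runs over all monomials m of degree exactly d' and c_m denotes the coefficient of m in f (i.e., this entry equals the image φ(f_{d'}) of the homogeneous degree-d' component of f under the substitution m ↦ Π_{t=1}^{d'} z_{σ_m(t), t, l^m_t}). -/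

import Mathlib

noncomputable section

open scoped BigOperators

namespace NAPIT

/-- The list of (leaf label, leaf level) pairs of a nonassociative monomial (element of the
free magma), in left-to-right order, where the root of the monomial is at level `s`. -/
def leafData {n : ℕ} : FreeMagma (Fin n) → ℕ → List (Fin n × ℕ)
  | FreeMagma.of i, s => [(i, s)]
  | FreeMagma.mul x y, s => leafData x (s + 1) ++ leafData y (s + 1)

/-- The degree (number of leaves) of a nonassociative monomial. -/
def degM {n : ℕ} : FreeMagma (Fin n) → ℕ
  | FreeMagma.of _ => 1
  | FreeMagma.mul x y => degM x + degM y

/-- The depth of a nonassociative monomial (root at level 1; the depth is the maximal level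
of a leaf). -/
def depthM {n : ℕ} : FreeMagma (Fin n) → ℕ
  | FreeMagma.of _ => 1
  | FreeMagma.mul x y => max (depthM x) (depthM y) + 1

/-- Evaluation of a nonassociative monomial at `b : Fin n → A`, using `mul` as the product on
`A`; this is the unique magma homomorphism `FreeMagma (Fin n) → (A, mul)` with `x_i ↦ b i`. -/
def evalWith {n : ℕ} {A : Type*} (mul : A → A → A) (b : Fin n → A) : FreeMagma (Fin n) → A
  | FreeMagma.of i => b i
  | FreeMagma.mul x y => mul (evalWith mul b x) (evalWith mul b y)

/-- The multiset of all variants `m_ε` of a monomial `m`, where `ε` ranges over all choices of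
a Boolean for each internal node of `m`, and `m_ε` is obtained from `m` by swapping the two
children at exactly those internal nodes where `ε` is true (counted with multiplicity). -/
def variants {n : ℕ} : FreeMagma (Fin n) → Multiset (FreeMagma (Fin n))
  | FreeMagma.of i => {FreeMagma.of i}
  | FreeMagma.mul x y =>
      (variants x).bind fun x' => (variants y).bind fun y' =>
        {FreeMagma.mul x' y', FreeMagma.mul y' x'}

/-- The underlying module of the algebra `A'_d(R)`: arrays `x[i,j,k]` with
`i, j ∈ Fin (d+1)`, `k ∈ Fin d` (zero-based; the paper's indices are shifted by one). -/
def Arr (d : ℕ) (R : Type*) : Type _ := Fin (d + 1) → Fin (d + 1) → Fin d → R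

namespace Arr

variable {d : ℕ} {R : Type*}

instance instAddCommGroup [AddCommGroup R] : AddCommGroup (Arr d R) :=
  inferInstanceAs (AddCommGroup (Fin (d + 1) → Fin (d + 1) → Fin d → R))

instance instModule {S : Type*} [Semiring S] [AddCommGroup R] [Module S R] :
    Module S (Arr d R) :=
  inferInstanceAs (Module S (Fin (d + 1) → Fin (d + 1) → Fin d → R))

/-- The bilinear product `∘` of `A'_d(R)`:
`(x ∘ y)[i,j,k] = ∑_{l} x[i,l,k+1] * y[l,j,k+1]` if `k+1` is a legal third index, else `0`. -/
def aprod [CommRing R] (x y : Arr d R) : Arr d R := fun i j k =>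
  if h : (k : ℕ) + 1 < d then
    ∑ l : Fin (d + 1), x i l ⟨(k : ℕ) + 1, h⟩ * y l j ⟨(k : ℕ) + 1, h⟩
  else 0

instance instMul [CommRing R] : Mul (Arr d R) := ⟨aprod⟩

end Arr

/-- The algebra `C'_d(R)`: same underlying module as `A'_d(R)`, with the anticommutator
product `a ⊙ b = a ∘ b + b ∘ a`. -/
def CArr (d : ℕ) (R : Type*) : Type _ := Arr d R

namespace CArr

variable {d : ℕ} {R : Type*}

/-- The identity map `A'_d(R) → C'_d(R)` of underlying modules. -/
def ofArr (x : Arr d R) : CArr d R := x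

/-- The identity map `C'_d(R) → A'_d(R)` of underlying modules. -/
def toArr (x : CArr d R) : Arr d R := x

instance instAddCommGroup [AddCommGroup R] : AddCommGroup (CArr d R) :=
  inferInstanceAs (AddCommGroup (Arr d R))

instance instModule {S : Type*} [Semiring S] [AddCommGroup R] [Module S R] :
    Module S (CArr d R) :=
  inferInstanceAs (Module S (Arr d R))

instance instMul [CommRing R] : Mul (CArr d R) :=
  ⟨fun a b => ofArr (toArr a * toArr b + toArr b * toArr a)⟩

end CArr

/-- The element `Z_i ∈ A'_d(R)`, `R = MvPolynomial (Fin n × Fin d × Fin d) F`, whose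
`(j, j+1, k)` entry is the indeterminate `z_{i,j,k}` and whose other entries vanish. -/
def Z (F : Type*) [CommRing F] (n d : ℕ) (i : Fin n) :
    Arr d (MvPolynomial (Fin n × Fin d × Fin d) F) := fun j j' k =>
  if h : (j : ℕ) < d ∧ (j' : ℕ) = (j : ℕ) + 1 then
    MvPolynomial.X (i, ⟨(j : ℕ), h.1⟩, k)
  else 0

/-- The element `Z_i` regarded as an element of `C'_d(R)`. -/
def ZC (F : Type*) [CommRing F] (n d : ℕ) (i : Fin n) :
    CArr d (MvPolynomial (Fin n × Fin d × Fin d) F) := CArr.ofArr (Z F n d i)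

/-- The monomial `∏_{t=1}^{d'} z_{σ_m(t), (t-1) + k1, (l^m_t - 1) + k2}` associated to a
nonassociative monomial `m` of degree `d'` and offsets `k1, k2` (all indices zero-based; the
paper's 1-based offsets are `k1 + 1`, `k2 + 1`).  Indices which would fall out of range are
discarded (this never happens in the intended range of parameters). -/
def monProd (F : Type*) [CommRing F] {n : ℕ} (d : ℕ) (k1 k2 : ℕ) (m : FreeMagma (Fin n)) :
    MvPolynomial (Fin n × Fin d × Fin d) F :=
  (((List.range (leafData m 1).length).zip (leafData m 1)).map fun p =>
    if h : p.1 + k1 < d ∧ p.2.2 - 1 + k2 < d then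
      MvPolynomial.X (p.2.1, ⟨p.1 + k1, h.1⟩, ⟨p.2.2 - 1 + k2, h.2⟩)
    else 0).prod

/-- `ψ(m) = ∑_ε ∏_{t=1}^{d'} z_{σ_{m_ε}(t), t, l^{m_ε}_t}` (1-based), the sum running over all
choices `ε` of a Boolean for each internal node of `m`. -/
def psi (F : Type*) [CommRing F] {n : ℕ} (d : ℕ) (m : FreeMagma (Fin n)) :
    MvPolynomial (Fin n × Fin d × Fin d) F :=
  ((variants m).map fun m' => monProd F d 0 0 m').sum

/-- The coefficient function of an element of the free nonunital nonassociative algebra. -/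
def coeffOf {F : Type*} [Semiring F] {n : ℕ}
    (f : FreeNonUnitalNonAssocAlgebra F (Fin n)) : FreeMagma (Fin n) →₀ F := f.coeff

/-- Evaluation of an element of the free nonunital nonassociative algebra on `x_1, …, x_n` at
the tuple `b`, with `mul` as the product of the target: the linear extension of
`m ↦ evalWith mul b m`, i.e. the unique nonunital `F`-algebra homomorphism sending
`x_i ↦ b i` into `(A, mul)`. -/
def evalNAWith {F : Type*} [Semiring F] {n : ℕ} {A : Type*}
    [AddCommMonoid A] [Module F A] (mul : A → A → A) (b : Fin n → A)
    (f : FreeNonUnitalNonAssocAlgebra F (Fin n)) : A :=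
  Finsupp.sum (coeffOf f) fun m c => c • evalWith mul b m

/-- Evaluation of an element of the free nonunital nonassociative algebra at a tuple `b` of
elements of a (not necessarily unital/associative) algebra `A`: the unique nonunital
`F`-algebra homomorphism sending `x_i ↦ b i`. -/
def evalNA {F : Type*} [Semiring F] {n : ℕ} {A : Type*}
    [AddCommMonoid A] [Mul A] [Module F A] (b : Fin n → A)
    (f : FreeNonUnitalNonAssocAlgebra F (Fin n)) : A :=
  evalNAWith (· * ·) b f

/-- Evaluation of an element of the unitization of the free nonunital nonassociative algebra
at a tuple `b` of elements of the unitization of `A`: the unique unital `F`-algebra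
homomorphism sending `x_i ↦ b i` (and the adjoined unit to the unit). -/
def evalUnit {F : Type*} [CommSemiring F] {n : ℕ} {A : Type*}
    [AddCommMonoid A] [Mul A] [Module F A] (b : Fin n → Unitization F A)
    (f : Unitization F (FreeNonUnitalNonAssocAlgebra F (Fin n))) : Unitization F A :=
  Unitization.inl f.fst + evalNA b f.snd

/-- The commutativity congruence on the free magma: the smallest equivalence relation with
`m₁ * m₂ ≈ m₂ * m₁` and compatible with the product. -/
inductive CommEq {n : ℕ} : FreeMagma (Fin n) → FreeMagma (Fin n) → Prop
  | refl (m : FreeMagma (Fin n)) : CommEq m m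
  | symm {a b : FreeMagma (Fin n)} : CommEq a b → CommEq b a
  | trans {a b c : FreeMagma (Fin n)} : CommEq a b → CommEq b c → CommEq a c
  | comm (a b : FreeMagma (Fin n)) : CommEq (a * b) (b * a)
  | mul_congr {a a' b b' : FreeMagma (Fin n)} :
      CommEq a a' → CommEq b b' → CommEq (a * b) (a' * b')

/-- The basis monomial `m` of the free nonunital nonassociative algebra. -/
def single1 (F : Type*) [Semiring F] {n : ℕ} (m : FreeMagma (Fin n)) :
    FreeNonUnitalNonAssocAlgebra F (Fin n) :=
  MonoidAlgebra.ofCoeff (Finsupp.single m 1 : FreeMagma (Fin n) →₀ F)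

/-- `I_comm`: the `F`-linear span of `{m − m' : m ≈ m'}` inside the free nonunital
nonassociative algebra. -/
def Icomm (F : Type*) [Field F] (n : ℕ) :
    Submodule F (FreeNonUnitalNonAssocAlgebra F (Fin n)) :=
  Submodule.span F
    {x | ∃ m m' : FreeMagma (Fin n), CommEq m m' ∧ x = single1 F m - single1 F m'}

/-! An entry `(j, j', k)` of the value of a monomial `m` at `Z` vanishes unless
`j' = j + deg m`: each `Z_i` raises the second index by one, and `∘` composes these shifts
while passing to level `k + 1`. By induction over `m` the surviving entry is the product over
the leaves of `z_{σ_m(t), j + t - 1, k + l^m_t - 1}` (both sides vanish once a level exceeds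
`d`). So the entry `(1, d' + 1, 1)` of `Φ(f)` only sees the degree-`d'` monomials of `f`. -/

section ZEntries

variable {F : Type*} [CommRing F] {n d : ℕ}

lemma one_le_degM (m : FreeMagma (Fin n)) : 1 ≤ degM m := by
  induction m with
  | ih1 => rfl
  | ih2 x y _ _ => simp only [degM]; omega

lemma length_leafData (m : FreeMagma (Fin n)) (s : ℕ) : (leafData m s).length = degM m := by
  induction m generalizing s with
  | ih1 => rfl
  | ih2 x y ihx ihy => simp [leafData, degM, ihx, ihy]

variable (F d) in
/-- The monomial `∏_t z_{σ_m(t), j + t - 1, k + l^m_t - 1}` (zero-based indices). -/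
def zMonomial : ℕ → ℕ → FreeMagma (Fin n) → MvPolynomial (Fin n × Fin d × Fin d) F
  | j, k, FreeMagma.of i =>
      if h : j < d ∧ k < d then MvPolynomial.X (i, ⟨j, h.1⟩, ⟨k, h.2⟩) else 0
  | j, k, FreeMagma.mul x y => zMonomial j (k + 1) x * zMonomial (j + degM x) (k + 1) y

lemma zMonomial_of_le (m : FreeMagma (Fin n)) {j k : ℕ} (hk : d ≤ k) :
    zMonomial F d j k m = 0 := by
  induction m generalizing j k with
  | ih1 => simp [zMonomial, show ¬k < d by omega]
  | ih2 x y ihx _ => simp [zMonomial, ihx (show d ≤ k + 1 by omega)]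

variable (F d) in
def leafProd (a : ℕ) (L : List (Fin n × ℕ)) : MvPolynomial (Fin n × Fin d × Fin d) F :=
  (((List.range' a L.length).zip L).map fun p =>
    if h : p.1 < d ∧ p.2.2 - 1 < d then
      MvPolynomial.X (p.2.1, ⟨p.1, h.1⟩, ⟨p.2.2 - 1, h.2⟩)
    else 0).prod

lemma leafProd_append (a : ℕ) (L₁ L₂ : List (Fin n × ℕ)) :
    leafProd F d a (L₁ ++ L₂) = leafProd F d a L₁ * leafProd F d (a + L₁.length) L₂ := by
  rw [leafProd, List.length_append, ← List.range'_append, Nat.one_mul,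
    List.zip_append List.length_range', List.map_append, List.prod_append, leafProd, leafProd]

lemma leafProd_leafData (m : FreeMagma (Fin n)) (a s : ℕ) :
    leafProd F d a (leafData m (s + 1)) = zMonomial F d a s m := by
  induction m generalizing a s with
  | ih1 => simp [leafProd, leafData, zMonomial]
  | ih2 x y ihx ihy =>
      change leafProd F d a (leafData x (s + 1 + 1) ++ leafData y (s + 1 + 1)) = _
      rw [leafProd_append, ihx, ihy, length_leafData]
      rfl

lemma monProd_eq_zMonomial (m : FreeMagma (Fin n)) : monProd F d 0 0 m = zMonomial F d 0 0 m := by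
  simpa [monProd, leafProd, List.range_eq_range'] using leafProd_leafData (F := F) (d := d) m 0 0

lemma evalWith_Z_apply_of_ne (m : FreeMagma (Fin n)) {j j' : Fin (d + 1)} (k : Fin d)
    (h : (j' : ℕ) ≠ j + degM m) : evalWith (· * ·) (Z F n d) m j j' k = 0 := by
  induction m generalizing j j' k with
  | ih1 =>
      simp only [evalWith, Z, degM] at h ⊢
      exact dif_neg fun hj => h hj.2
  | ih2 x y ihx ihy =>
      show Arr.aprod _ _ j j' k = 0
      unfold Arr.aprod
      split_ifs
      · refine Finset.sum_eq_zero fun l _ => ?_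
        by_cases hl : (l : ℕ) = j + degM x
        · rw [ihy _ (by simp only [degM] at h; omega), mul_zero]
        · rw [ihx _ hl, zero_mul]
      · rfl

lemma evalWith_Z_apply (m : FreeMagma (Fin n)) {j j' : Fin (d + 1)} (k : Fin d)
    (h : (j' : ℕ) = j + degM m) :
    evalWith (· * ·) (Z F n d) m j j' k = zMonomial F d j k m := by
  induction m generalizing j j' k with
  | ih1 =>
      simp only [degM] at h
      simp [evalWith, Z, zMonomial, h, show (j : ℕ) < d by omega]
  | ih2 x y ihx ihy =>
      simp only [degM] at h
      show Arr.aprod _ _ j j' k =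
        zMonomial F d j (k + 1) x * zMonomial F d (j + degM x) (k + 1) y
      unfold Arr.aprod
      split_ifs with hk
      · have hl : (j : ℕ) + degM x < d + 1 := by have := one_le_degM y; omega
        rw [Finset.sum_eq_single ⟨j + degM x, hl⟩, ihx _ rfl, ihy _ (by simp only [h]; ac_rfl)]
        · intro l _ hne
          rw [evalWith_Z_apply_of_ne x _ (fun h => hne (Fin.ext h)), zero_mul]
        · simp
      · rw [zMonomial_of_le x (by omega), zero_mul]

end ZEntries

lemma evalNA_apply {F : Type*} [Semiring F] {n d : ℕ} {R : Type*} [CommRing R] [Module F R]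
    (b : Fin n → Arr d R) (f : FreeNonUnitalNonAssocAlgebra F (Fin n)) (i j : Fin (d + 1))
    (k : Fin d) :
    evalNA b f i j k =
      ∑ m ∈ (coeffOf f).support, coeffOf f m • evalWith (· * ·) b m i j k := by
  simp only [evalNA, evalNAWith, Finsupp.sum]
  exact map_sum (⟨⟨fun x : Arr d R => x i j k, rfl⟩, fun _ _ => rfl⟩ : Arr d R →+ R) _ _

/-- consequence of Claim 3.3.  Let `F` be a field, `n, d ≥ 1`, let `f` be an
element of the free nonunital nonassociative noncommutative algebra `F_{Ā,C̄}[X]` of degree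
`≤ d`, and let `1 ≤ d' ≤ d`.  Then the `(1, d'+1, 1)` entry (1-based; zero-based `(0, d', 0)`)
of the evaluation `Φ(f)` of `f` at `(Z_1, …, Z_n)` under the `∘` product equals
`∑_m c_m ∏_{t=1}^{d'} z_{σ_m(t), t, l^m_t}`, the sum running over all monomials `m` of degree
exactly `d'`, where `c_m` is the coefficient of `m` in `f`; i.e. it is the image `φ(f_{d'})`
of the degree-`d'` homogeneous component of `f`. -/
theorem entry_of_eval_free_at_Z {F : Type*} [Field F] (n d : ℕ) (hd : 1 ≤ d)
    (f : FreeNonUnitalNonAssocAlgebra F (Fin n))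
    (d' : ℕ) (hd'2 : d' ≤ d) :
    evalNA (Z F n d) f ⟨0, by omega⟩ ⟨d', by omega⟩ ⟨0, by omega⟩
      = ∑ m ∈ (coeffOf f).support.filter (fun m => degM m = d'),
          MvPolynomial.C (coeffOf f m) * monProd F d 0 0 m := by
  rw [evalNA_apply, ← Finset.sum_filter_of_ne (p := fun m => degM m = d') fun m _ hm => ?_]
  · refine Finset.sum_congr rfl fun m hm => ?_
    rw [evalWith_Z_apply m _ (by simp [(Finset.mem_filter.1 hm).2]), monProd_eq_zMonomial,
      MvPolynomial.smul_eq_C_mul]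
  · by_contra hne
    exact hm (by rw [evalWith_Z_apply_of_ne m _ (by simpa using Ne.symm hne), smul_zero])

end NAPIT
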